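/- Let Ẑ₀ = {(0,1),(1,1),(0,−1),(−1,−1)} ⊆ ℤ² and inductively for n ≥ 1 define Ẑₙ := {k + ℓ : k ∈ Ẑₙ₋₁, ℓ ∈ Ẑ₀, k₂ℓ₁ − k₁ℓ₂ ≠ 0, |k| ≠ |ℓ|}. Then ⋃_{n≥0} Ẑₙ = ℤ² ∖ {(0,0)}. -/
import Mathlib


/-- Euclidean norm of an integer vector. -/
noncomputable def znorm (k : ℤ × ℤ) : ℝ := Real.sqrt ((k.1 : ℝ) ^ 2 + (k.2 : ℝ) ^ 2)

/-- One step of the generating procedure: from the set `A`, using directions `ℓ ∈ S`. -/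
def Znext (S A : Set (ℤ × ℤ)) : Set (ℤ × ℤ) :=
  {p | ∃ k ∈ A, ∃ l ∈ S, k.2 * l.1 - k.1 * l.2 ≠ 0 ∧ znorm k ≠ znorm l ∧ p = k + l}

/-- The set `Ẑ₀`. -/
def Zhat0 : Set (ℤ × ℤ) := {(0, 1), (1, 1), (0, -1), (-1, -1)}

/-- The sets `Ẑₙ`. -/
def Zhat : ℕ → Set (ℤ × ℤ)
  | 0 => Zhat0
  | n + 1 => Znext Zhat0 (Zhat n)

/-- The union of all the `Ẑₙ`. -/
def Uhat : Set (ℤ × ℤ) := ⋃ n : ℕ, Zhat n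

lemma memU_of_zhat {n : ℕ} {p : ℤ × ℤ} (h : p ∈ Zhat n) : p ∈ Uhat :=
  Set.mem_iUnion.2 ⟨n, h⟩

lemma memU0 {p : ℤ × ℤ} (h : p ∈ Zhat0) : p ∈ Uhat := memU_of_zhat (n := 0) h

lemma znorm_ne {k l : ℤ × ℤ} (h : k.1 ^ 2 + k.2 ^ 2 ≠ l.1 ^ 2 + l.2 ^ 2) :
    znorm k ≠ znorm l := by
  intro he
  apply h
  have hk : (znorm k) ^ 2 = (k.1 : ℝ) ^ 2 + (k.2 : ℝ) ^ 2 := Real.sq_sqrt (by positivity)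
  have hl : (znorm l) ^ 2 = (l.1 : ℝ) ^ 2 + (l.2 : ℝ) ^ 2 := Real.sq_sqrt (by positivity)
  have h2 : ((k.1 : ℝ) ^ 2 + (k.2 : ℝ) ^ 2) = (l.1 : ℝ) ^ 2 + (l.2 : ℝ) ^ 2 := by
    rw [← hk, ← hl, he]
  exact_mod_cast h2

lemma memU_step {k l : ℤ × ℤ} (hk : k ∈ Uhat) (hl : l ∈ Zhat0)
    (hc : k.2 * l.1 - k.1 * l.2 ≠ 0) (hn : k.1 ^ 2 + k.2 ^ 2 ≠ l.1 ^ 2 + l.2 ^ 2) :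
    k + l ∈ Uhat := by
  obtain ⟨n, hkn⟩ := Set.mem_iUnion.1 hk
  exact memU_of_zhat (n := n + 1) ⟨k, hkn, l, hl, hc, znorm_ne hn, rfl⟩

/- Direction (0,1). -/
lemma step_u {a b : ℤ} (h : ((a, b - 1) : ℤ × ℤ) ∈ Uhat) (ha : a ≠ 0)
    (hn : a ^ 2 + (b - 1) ^ 2 ≠ 1) : ((a, b) : ℤ × ℤ) ∈ Uhat := by
  have hl : ((0, 1) : ℤ × ℤ) ∈ Zhat0 := by simp [Zhat0]
  have he : ((a, b) : ℤ × ℤ) = (a, b - 1) + (0, 1) := by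
    simp [Prod.ext_iff]
  rw [he]
  exact memU_step h hl (by intro hc; simp at hc; exact ha hc) (by intro hh; simp at hh; apply hn; linarith)

/- Direction (0,-1). -/
lemma step_d {a b : ℤ} (h : ((a, b + 1) : ℤ × ℤ) ∈ Uhat) (ha : a ≠ 0)
    (hn : a ^ 2 + (b + 1) ^ 2 ≠ 1) : ((a, b) : ℤ × ℤ) ∈ Uhat := by
  have hl : ((0, -1) : ℤ × ℤ) ∈ Zhat0 := by simp [Zhat0]
  have he : ((a, b) : ℤ × ℤ) = (a, b + 1) + (0, -1) := by
    simp [Prod.ext_iff]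
  rw [he]
  exact memU_step h hl (by intro hc; simp at hc; exact ha hc) (by intro hh; simp at hh; apply hn; linarith)

/- Direction (1,1). -/
lemma step_pp {a b : ℤ} (h : ((a - 1, b - 1) : ℤ × ℤ) ∈ Uhat) (hab : a ≠ b)
    (hn : (a - 1) ^ 2 + (b - 1) ^ 2 ≠ 2) : ((a, b) : ℤ × ℤ) ∈ Uhat := by
  have hl : ((1, 1) : ℤ × ℤ) ∈ Zhat0 := by simp [Zhat0]
  have he : ((a, b) : ℤ × ℤ) = (a - 1, b - 1) + (1, 1) := by
    simp [Prod.ext_iff]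
  rw [he]
  exact memU_step h hl (by intro hc; simp at hc; apply hab; linarith) (by intro hh; simp at hh; apply hn; linarith)

/- Direction (-1,-1). -/
lemma step_mm {a b : ℤ} (h : ((a + 1, b + 1) : ℤ × ℤ) ∈ Uhat) (hab : a ≠ b)
    (hn : (a + 1) ^ 2 + (b + 1) ^ 2 ≠ 2) : ((a, b) : ℤ × ℤ) ∈ Uhat := by
  have hl : ((-1, -1) : ℤ × ℤ) ∈ Zhat0 := by simp [Zhat0]
  have he : ((a, b) : ℤ × ℤ) = (a + 1, b + 1) + (-1, -1) := by
    simp [Prod.ext_iff]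
  rw [he]
  exact memU_step h hl (by intro hc; simp at hc; apply hab; linarith) (by intro hh; simp at hh; apply hn; linarith)

lemma sq_pos_ne {x : ℤ} (hx : x ≠ 0) : 1 ≤ x ^ 2 := by
  have h : x ≤ -1 ∨ 1 ≤ x := by omega
  rcases h with h | h <;> nlinarith

lemma cast_succ_sq (m : ℕ) : 1 ≤ ((m : ℤ) + 1) ^ 2 :=
  sq_pos_ne (by positivity : (0:ℤ) < (m : ℤ) + 1).ne'

lemma sq_eq_one_int {x : ℤ} (h : x ^ 2 = 1) : x = 1 ∨ x = -1 := by
  have h' : x * x = 1 := by nlinarith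
  rcases Int.mul_eq_one_iff_eq_one_or_neg_one.mp h' with ⟨h1, _⟩ | ⟨h1, _⟩
  · exact Or.inl h1
  · exact Or.inr h1

/- Column 1, upper part. -/
lemma col1_up : ∀ n : ℕ, ((1, (n : ℤ) + 1) : ℤ × ℤ) ∈ Uhat := by
  intro n
  induction n with
  | zero => exact memU0 (by simp [Zhat0])
  | succ m ih =>
      have : ((1, ((m : ℤ) + 1) + 1) : ℤ × ℤ) ∈ Uhat := by
        apply step_u (by simpa using ih) one_ne_zero
        nlinarith [cast_succ_sq m]
      simpa [add_assoc] using this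

/- Column -1, lower part. -/
lemma colm1_dn : ∀ n : ℕ, ((-1, -((n : ℤ) + 1)) : ℤ × ℤ) ∈ Uhat := by
  intro n
  induction n with
  | zero => exact memU0 (by simp [Zhat0])
  | succ m ih =>
      have : ((-1, -(((m : ℤ) + 1) + 1)) : ℤ × ℤ) ∈ Uhat := by
        apply step_d
        · have he : -(((m : ℤ) + 1) + 1) + 1 = -((m : ℤ) + 1) := by ring
          rw [he]; exact ih
        · norm_num
        · nlinarith [cast_succ_sq m]
      have he2 : -(((m : ℤ) + 1) + 1) = -((m + 1 : ℕ) + 1 : ℤ) := by push_cast; ring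
      rw [← he2]; exact this
  
lemma col1_zero : ((1, 0) : ℤ × ℤ) ∈ Uhat := by
  apply step_d (memU0 (p := ((1, 1) : ℤ × ℤ)) (by simp [Zhat0])) one_ne_zero
  norm_num

lemma colm1_zero : ((-1, 0) : ℤ × ℤ) ∈ Uhat := by
  apply step_u (memU0 (p := ((-1, -1) : ℤ × ℤ)) (by simp [Zhat0])) (by norm_num)
  norm_num

lemma zero_m2 : ((0, -2) : ℤ × ℤ) ∈ Uhat := by
  apply step_pp (a := 0) (b := -2)
  · have := colm1_dn 2
    norm_num at this ⊢
    exact this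
  · norm_num
  · norm_num

lemma col1_m1 : ((1, -1) : ℤ × ℤ) ∈ Uhat := by
  apply step_pp (a := 1) (b := -1)
  · norm_num [zero_m2]
  · norm_num
  · norm_num

lemma col1_dn : ∀ n : ℕ, ((1, -((n : ℤ) + 1)) : ℤ × ℤ) ∈ Uhat := by
  intro n
  induction n with
  | zero => simpa using col1_m1
  | succ m ih =>
      have : ((1, -(((m : ℤ) + 1) + 1)) : ℤ × ℤ) ∈ Uhat := by
        apply step_d
        · have he : -(((m : ℤ) + 1) + 1) + 1 = -((m : ℤ) + 1) := by ring
          rw [he]; exact ih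
        · norm_num
        · nlinarith [cast_succ_sq m]
      have he2 : -(((m : ℤ) + 1) + 1) = -((m + 1 : ℕ) + 1 : ℤ) := by push_cast; ring
      rw [← he2]; exact this

lemma zero_p2 : ((0, 2) : ℤ × ℤ) ∈ Uhat := by
  apply step_mm (a := 0) (b := 2)
  · have := col1_up 2
    norm_num at this ⊢
    exact this
  · norm_num
  · norm_num

lemma colm1_p1 : ((-1, 1) : ℤ × ℤ) ∈ Uhat := by
  apply step_mm (a := -1) (b := 1)
  · norm_num [zero_p2]
  · norm_num
  · norm_num

lemma colm1_up : ∀ n : ℕ, ((-1, (n : ℤ) + 1) : ℤ × ℤ) ∈ Uhat := by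
  intro n
  induction n with
  | zero => simpa using colm1_p1
  | succ m ih =>
      have : ((-1, ((m : ℤ) + 1) + 1) : ℤ × ℤ) ∈ Uhat := by
        apply step_u (by simpa using ih) (by norm_num)
        nlinarith [cast_succ_sq m]
      simpa [add_assoc] using this

lemma col1 : ∀ b : ℤ, ((1, b) : ℤ × ℤ) ∈ Uhat := by
  intro b
  rcases lt_trichotomy b 0 with hb | hb | hb
  · have h1 : ((-b - 1).toNat : ℤ) = -b - 1 := by omega
    have := col1_dn (-b - 1).toNat
    rw [h1] at this
    have he : -(-b - 1 + 1) = b := by ring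
    rwa [he] at this
  · rw [hb]; exact col1_zero
  · have h1 : ((b - 1).toNat : ℤ) = b - 1 := by omega
    have := col1_up (b - 1).toNat
    rw [h1] at this
    have he : b - 1 + 1 = b := by ring
    rwa [he] at this

lemma colm1 : ∀ b : ℤ, ((-1, b) : ℤ × ℤ) ∈ Uhat := by
  intro b
  rcases lt_trichotomy b 0 with hb | hb | hb
  · have h1 : ((-b - 1).toNat : ℤ) = -b - 1 := by omega
    have := colm1_dn (-b - 1).toNat
    rw [h1] at this
    have he : -(-b - 1 + 1) = b := by ring
    rwa [he] at this
  · rw [hb]; exact colm1_zero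
  · have h1 : ((b - 1).toNat : ℤ) = b - 1 := by omega
    have := colm1_up (b - 1).toNat
    rw [h1] at this
    have he : b - 1 + 1 = b := by ring
    rwa [he] at this

lemma axisU : ∀ b : ℤ, b ≠ 0 → ((0, b) : ℤ × ℤ) ∈ Uhat := by
  intro b hb
  by_cases h2 : b = 2
  · rw [h2]; exact zero_p2
  · apply step_pp (a := 0) (b := b)
    · exact colm1 (b - 1)
    · omega
    · intro hh
      have h1 : (b - 1) ^ 2 = 1 := by linarith
      rcases sq_eq_one_int h1 with h | h <;> omega

lemma mainU : ∀ n : ℕ, ∀ a b : ℤ, a.natAbs ≤ n → ((a, b) : ℤ × ℤ) ≠ (0, 0) →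
    ((a, b) : ℤ × ℤ) ∈ Uhat := by
  intro n
  induction n with
  | zero =>
      intro a b ha hab
      have ha0 : a = 0 := by omega
      subst ha0
      have hb : b ≠ 0 := by simpa [Prod.ext_iff] using hab
      exact axisU b hb
  | succ m ih =>
      intro a b ha hab
      by_cases hle : a.natAbs ≤ m
      · exact ih a b hle hab
      have han : a.natAbs = m + 1 := by omega
      by_cases hm0 : m = 0
      · subst hm0
        have : a = 1 ∨ a = -1 := by omega
        rcases this with h | h <;> subst h
        · exact col1 b
        · exact colm1 b
      -- |a| ≥ 2
      have ha2 : 2 ≤ a ∨ a ≤ -2 := by omega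
      rcases ha2 with hge | hle2
      · -- a ≥ 2
        have claim : ∀ c : ℤ, c ≠ a → ((a, c) : ℤ × ℤ) ∈ Uhat := by
          intro c hc
          by_cases hsp : a = 2 ∧ c = 0
          · obtain ⟨ha', hc'⟩ := hsp
            subst ha'; subst hc'
            have h1 : ((2, -1) : ℤ × ℤ) ∈ Uhat := by
              apply step_pp (a := 2) (b := -1)
              · exact ih 1 (-2) (by omega) (by simp)
              · norm_num
              · norm_num
            apply step_u (a := 2) (b := 0) (by simpa using h1) (by norm_num)
            norm_num
          · apply step_pp (a := a) (b := c)
            · apply ih (a - 1) (c - 1) (by omega)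
              simp only [ne_eq, Prod.mk.injEq, not_and]
              intro h; omega
            · omega
            · intro hh
              have h2 : (c - 1) ^ 2 ≥ 0 := sq_nonneg _
              have h3 : (a - 1) ^ 2 ≤ 2 := by linarith
              have h4' : a ≤ 2 := by nlinarith [sq_nonneg (a - 3)]
              have h4 : a = 2 := by omega
              have h5 : (c - 1) ^ 2 = 1 := by rw [h4] at hh; linarith
              rcases sq_eq_one_int h5 with h | h
              · exact hsp ⟨h4, by omega⟩
              · omega
        by_cases hba : b = a
        · subst hba
          apply step_u (claim (b - 1) (by omega)) (by omega)
          intro hh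
          nlinarith [sq_nonneg (b - 2), sq_nonneg (b - 1)]
        · exact claim b hba
      · -- a ≤ -2
        have claim : ∀ c : ℤ, c ≠ a → ((a, c) : ℤ × ℤ) ∈ Uhat := by
          intro c hc
          by_cases hsp : a = -2 ∧ c = 0
          · obtain ⟨ha', hc'⟩ := hsp
            subst ha'; subst hc'
            have h1 : ((-2, 1) : ℤ × ℤ) ∈ Uhat := by
              apply step_mm (a := -2) (b := 1)
              · exact ih (-1) 2 (by omega) (by simp)
              · norm_num
              · norm_num
            apply step_d (a := -2) (b := 0) (by simpa using h1) (by norm_num)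
            norm_num
          · apply step_mm (a := a) (b := c)
            · apply ih (a + 1) (c + 1) (by omega)
              simp only [ne_eq, Prod.mk.injEq, not_and]
              intro h; omega
            · omega
            · intro hh
              have h2 : (c + 1) ^ 2 ≥ 0 := sq_nonneg _
              have h3 : (a + 1) ^ 2 ≤ 2 := by linarith
              have h4' : -2 ≤ a := by nlinarith [sq_nonneg (a + 3)]
              have h4 : a = -2 := by omega
              have h5 : (c + 1) ^ 2 = 1 := by rw [h4] at hh; linarith
              rcases sq_eq_one_int h5 with h | h
              · exact hsp ⟨h4, by omega⟩
              · omega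
        by_cases hba : b = a
        · subst hba
          apply step_d (claim (b + 1) (by omega)) (by omega)
          intro hh
          nlinarith [sq_nonneg (b + 2), sq_nonneg (b + 1)]
        · exact claim b hba

lemma zhat_ne_zero : ∀ n : ℕ, ∀ p ∈ Zhat n, p ≠ ((0, 0) : ℤ × ℤ) := by
  intro n
  induction n with
  | zero =>
      intro p hp
      simp only [Zhat, Zhat0, Set.mem_insert_iff, Set.mem_singleton_iff] at hp
      rcases hp with h | h | h | h <;> subst h <;> simp [Prod.ext_iff]
  | succ m ih =>
      intro p hp
      obtain ⟨k, hk, l, hl, hc, hn, rfl⟩ := hp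
      intro h0
      apply hc
      have h1 : k.1 + l.1 = 0 := congrArg Prod.fst h0
      have h2 : k.2 + l.2 = 0 := congrArg Prod.snd h0
      have e1 : k.1 = -l.1 := by linarith
      have e2 : k.2 = -l.2 := by linarith
      rw [e1, e2]; ring

theorem Zhat_union_cover : (⋃ n : ℕ, Zhat n) = {k : ℤ × ℤ | k ≠ (0, 0)} := by
  ext p
  simp only [Set.mem_setOf_eq, Set.mem_iUnion]
  constructor
  · rintro ⟨n, hn⟩
    exact zhat_ne_zero n p hn
  · intro hp
    have : p ∈ Uhat := mainU p.1.natAbs p.1 p.2 le_rfl (by simpa using hp)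
    exact Set.mem_iUnion.1 this
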